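/- Let P_0 and R_0 be non-isomorphic posets, each of size m, and let i > m. Then the number of isomorphism classes of downsets of size m+i+1 of the disjoint union P_iR_i is d_{m+i+1}(P_iR_i) = C(P_0R_0) + ⌈(i−m)/2⌉. In particular, for i > m the sequence satisfies d_{m+i+1}(P_iR_i) = d_{m+i}(P_{i−1}R_{i−1}) if m+i is even and d_{m+i+1}(P_iR_i) = d_{m+i}(P_{i−1}R_{i−1}) + 1 if m+i is odd. -/

import Mathlib

/-!
Formalization framework: finite posets are bundled as `FinPartOrd.{0}`, downsets are
`Finset`s of elements, unlabelled posets are isomorphism classes (`UPoset`), and a witness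
of a set `Γ` of unlabelled posets at size `n` is a finite poset whose set of size-`n`
downsets, up to isomorphism, is exactly `Γ`.
-/

attribute [local instance] Classical.propDecidable

noncomputable section

open Finset

/-- `D` is a downset of the finite poset `Q`. -/
def IsDownset (Q : FinPartOrd.{0}) (D : Finset ↥Q) : Prop :=
  ∀ ⦃a b : ↥Q⦄, a ∈ D → b ≤ a → b ∈ D

/-- The induced subposet of `Q` on a finset `D` of its elements. -/
def subposet (Q : FinPartOrd.{0}) (D : Finset ↥Q) : FinPartOrd.{0} :=
  FinPartOrd.of {x : ↥Q // x ∈ D}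

/-- The isomorphism setoid on finite posets. -/
def isoSetoid : Setoid FinPartOrd.{0} where
  r P Q := Nonempty (↥P ≃o ↥Q)
  iseqv := ⟨fun _ => ⟨OrderIso.refl _⟩, fun ⟨e⟩ => ⟨e.symm⟩, fun ⟨e⟩ ⟨f⟩ => ⟨e.trans f⟩⟩

/-- Unlabelled finite posets: isomorphism classes of finite posets. -/
def UPoset := Quotient isoSetoid

/-- The isomorphism class of a finite poset. -/
def cls (P : FinPartOrd.{0}) : UPoset := Quotient.mk isoSetoid P

/-- The number of elements of a finite poset. -/
def size (Q : FinPartOrd.{0}) : ℕ := Fintype.card ↥Q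

/-- The size of an isomorphism class of finite posets. -/
def usize : UPoset → ℕ :=
  Quotient.lift size fun _ _ h => h.elim fun e => Fintype.card_congr e.toEquiv

/-- `D_n(Q)` : the set of downsets of `Q` of size `n`, up to isomorphism. -/
def DSet (n : ℕ) (Q : FinPartOrd.{0}) : Set UPoset :=
  {c | ∃ D : Finset ↥Q, IsDownset Q D ∧ D.card = n ∧ cls (subposet Q D) = c}

/-- `d_n(Q)` : the number of isomorphism classes of downsets of `Q` of size `n`. -/
def dNum (n : ℕ) (Q : FinPartOrd.{0}) : ℕ := (DSet n Q).ncard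

/-- `D(Q)` : the set of nonempty downsets of `Q`, up to isomorphism. -/
def DAllSet (Q : FinPartOrd.{0}) : Set UPoset :=
  {c | ∃ D : Finset ↥Q, IsDownset Q D ∧ D.Nonempty ∧ cls (subposet Q D) = c}

/-- `Q` is a witness of the set `Γ` of unlabelled posets (at size `n`): the set of size-`n`
downsets of `Q`, up to isomorphism, is exactly `Γ`. -/
def IsWitness (n : ℕ) (Γ : Set UPoset) (Q : FinPartOrd.{0}) : Prop := DSet n Q = Γ

/-- `Q` is a minimal witness of `Γ` : `Q` is a witness and no proper downset of `Q` is
itself a witness of `Γ`. -/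
def IsMinimalWitness (n : ℕ) (Γ : Set UPoset) (Q : FinPartOrd.{0}) : Prop :=
  IsWitness n Γ Q ∧
    ∀ D : Finset ↥Q, IsDownset Q D → D ≠ Finset.univ → ¬IsWitness n Γ (subposet Q D)

/-- The height of an element: the number of elements of a longest chain whose maximum is `x`. -/
def heightEl (Q : FinPartOrd.{0}) (x : ↥Q) : ℕ :=
  sSup {k | ∃ c : Finset ↥Q, IsChain (· ≤ ·) (c : Set ↥Q) ∧ x ∈ c ∧ (∀ y ∈ c, y ≤ x) ∧ c.card = k}

/-- The height of a finite poset: the number of elements of a longest chain. -/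
def posetHeight (Q : FinPartOrd.{0}) : ℕ :=
  sSup {k | ∃ c : Finset ↥Q, IsChain (· ≤ ·) (c : Set ↥Q) ∧ c.card = k}

/-- A finite poset is Newtonian if every element of level `i` covers every element of
level `i - 1`. -/
def Newtonian (Q : FinPartOrd.{0}) : Prop :=
  ∀ x y : ↥Q, heightEl Q y = heightEl Q x + 1 → x ⋖ y

/-- A finite poset is connected if it is nonempty and any two elements are joined by a
comparability path. -/
def ConnectedPoset (Q : FinPartOrd.{0}) : Prop :=
  Nonempty ↥Q ∧ ∀ x y : ↥Q, Relation.ReflTransGen (fun a b : ↥Q => a ≤ b ∨ b ≤ a) x y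

/-- `x` is a maximal element of the subset `W` of `Q`. -/
def IsMaxIn (Q : FinPartOrd.{0}) (W : Finset ↥Q) (x : ↥Q) : Prop :=
  x ∈ W ∧ ∀ y ∈ W, x ≤ y → y = x

/-- `x` is a maximal element of the finite poset `R`. -/
def IsMaxEl (R : FinPartOrd.{0}) (x : ↥R) : Prop := ∀ y, x ≤ y → y = x

/-- A poset of type 𝒲 : the disjoint union of two connected Newtonian posets that are not
isomorphic, but which only differ in one maximal element (they become isomorphic after the
removal of a suitable maximal element from each). -/
def TypeW (P : FinPartOrd.{0}) : Prop :=
  ∃ W₁ W₂ : Finset ↥P,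
    W₁ ∪ W₂ = Finset.univ ∧ Disjoint W₁ W₂ ∧
    (∀ x ∈ W₁, ∀ y ∈ W₂, ¬x ≤ y ∧ ¬y ≤ x) ∧
    ConnectedPoset (subposet P W₁) ∧ ConnectedPoset (subposet P W₂) ∧
    Newtonian (subposet P W₁) ∧ Newtonian (subposet P W₂) ∧
    ¬Nonempty (↥(subposet P W₁) ≃o ↥(subposet P W₂)) ∧
    ∃ x y, IsMaxIn P W₁ x ∧ IsMaxIn P W₂ y ∧
      Nonempty (↥(subposet P (W₁.erase x)) ≃o ↥(subposet P (W₂.erase y)))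

/-- An antichain on `i` elements. -/
def AntichainFin (i : ℕ) : Type := Fin i

instance (i : ℕ) : PartialOrder (AntichainFin i) where
  le x y := x = y
  le_refl _ := rfl
  le_trans a b c h₁ h₂ := show a = c from (show a = b from h₁).trans (show b = c from h₂)
  le_antisymm _ _ h _ := h

instance (i : ℕ) : Fintype (AntichainFin i) := inferInstanceAs (Fintype (Fin i))
instance (i : ℕ) : Fintype (WithTop (AntichainFin i)) :=
  inferInstanceAs (Fintype (Option (Fin i)))

/-- `Λ_i`: the poset with `i` minimal elements and one maximal element above all of them. -/
def Lambda (i : ℕ) : FinPartOrd.{0} := FinPartOrd.of (WithTop (AntichainFin i))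

/-- `k` disjoint copies of a poset `α`. -/
def Copies (k : ℕ) (α : Type) : Type := Fin k × α

instance (k : ℕ) (α : Type) [PartialOrder α] : PartialOrder (Copies k α) where
  le x y := x.1 = y.1 ∧ x.2 ≤ y.2
  le_refl _ := ⟨rfl, le_refl _⟩
  le_trans _ _ _ h₁ h₂ := ⟨h₁.1.trans h₂.1, le_trans h₁.2 h₂.2⟩
  le_antisymm x y h₁ h₂ := by
    obtain ⟨x₁, x₂⟩ := x
    obtain ⟨y₁, y₂⟩ := y
    obtain ⟨h, h'⟩ := h₁
    cases h
    exact congrArg _ (le_antisymm h' h₂.2)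

instance (k : ℕ) (α : Type) [Fintype α] : Fintype (Copies k α) :=
  inferInstanceAs (Fintype (Fin k × α))

/-- `H_ℓ`: the poset whose connected components are `ℓ` copies of `Λ₂` and one copy of
`Λ_{3(ℓ-1)}`. -/
def Hposet (ℓ : ℕ) : FinPartOrd.{0} :=
  FinPartOrd.of (Copies ℓ (WithTop (AntichainFin 2)) ⊕ WithTop (AntichainFin (3 * (ℓ - 1))))

/-- The poset `P₀` placed above a chain of `i` elements. -/
def withChain (P₀ : FinPartOrd.{0}) (i : ℕ) : FinPartOrd.{0} :=
  FinPartOrd.of (Fin i ⊕ₗ ↥P₀)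

/-- The disjoint union of two finite posets. -/
def disjSum (P R : FinPartOrd.{0}) : FinPartOrd.{0} := FinPartOrd.of (↥P ⊕ ↥R)

/-- The poset `P_iR_i`: the disjoint union of `P₀` and `R₀` each placed above a chain of
`i` elements. -/
def PRposet (P₀ R₀ : FinPartOrd.{0}) (i : ℕ) : FinPartOrd.{0} :=
  disjSum (withChain P₀ i) (withChain R₀ i)

/-- `C(P₀R₀) = |D(P₀)| + |D(R₀)| − |D(P₀) ∩ D(R₀)|`. -/
def CNum (P₀ R₀ : FinPartOrd.{0}) : ℕ :=
  (DAllSet P₀).ncard + (DAllSet R₀).ncard - (DAllSet P₀ ∩ DAllSet R₀).ncard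

/-- The vertices of the exchange graph: the downsets of `Q` of size `n`, as actual subsets. -/
def EGVert (n : ℕ) (Q : FinPartOrd.{0}) : Type :=
  {D : Finset ↥Q // IsDownset Q D ∧ D.card = n}

/-- The exchange graph `G_n(Q)`: two size-`n` downsets are adjacent iff they differ by
exactly one element. -/
def ExchangeGraph (n : ℕ) (Q : FinPartOrd.{0}) : SimpleGraph (EGVert n Q) where
  Adj X Y := (X.1 \ Y.1).card = 1 ∧ (Y.1 \ X.1).card = 1
  symm := ⟨fun X Y h => ⟨h.2, h.1⟩⟩
  loopless := ⟨fun X h => by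
    simp only [Finset.sdiff_self, Finset.card_empty] at h
    exact absurd h.1 (by simp)⟩

/-- The downset `D` of `Q`, viewed as a poset, is isomorphic (a "copy of") `P`. -/
def IsoTo (Q : FinPartOrd.{0}) (D : Finset ↥Q) (P : FinPartOrd.{0}) : Prop :=
  Nonempty (↥(subposet Q D) ≃o ↥P)

/-- A path `A :: M ++ [C]` in the exchange graph `G_n(Q)` whose first vertex is a copy of
`Pa`, whose last vertex is a copy of `Pb`, and all of whose internal vertices are copies of
`Pmid`. -/
def SpecialPath (n : ℕ) (Q : FinPartOrd.{0}) (Pa Pmid Pb : FinPartOrd.{0})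
    (A : EGVert n Q) (M : List (EGVert n Q)) (C : EGVert n Q) : Prop :=
  List.Chain' (ExchangeGraph n Q).Adj (A :: M ++ [C]) ∧
    IsoTo Q A.1 Pa ∧ IsoTo Q C.1 Pb ∧ ∀ v ∈ M, IsoTo Q v.1 Pmid

/-- `T` is an antichain in `Q`. -/
def IsAntichainIn (Q : FinPartOrd.{0}) (T : Finset ↥Q) : Prop :=
  ∀ x ∈ T, ∀ y ∈ T, x ≤ y → x = y

/-- The possible shapes of `A \ X` and `C \ X`: an antichain possibly together with a single
element below all of it and/or a single element above all of it, or a two-element chain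
together with one incomparable element. -/
def GoodForm (Q : FinPartOrd.{0}) (S : Finset ↥Q) : Prop :=
  (∃ T : Finset ↥Q, IsAntichainIn Q T ∧
    (S = T ∨
      (∃ b, b ∉ T ∧ S = insert b T ∧ ∀ x ∈ T, b < x) ∨
      (∃ t, t ∉ T ∧ S = insert t T ∧ ∀ x ∈ T, x < t) ∨
      (∃ b t, b ∉ T ∧ t ∉ T ∧ b ≠ t ∧ S = insert b (insert t T) ∧
        (∀ x ∈ T, b < x) ∧ ∀ x ∈ T, x < t))) ∨
  (∃ x y z : ↥Q, S = {x, y, z} ∧ x ≠ y ∧ x ≠ z ∧ y ≠ z ∧ x < y ∧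
    ¬x ≤ z ∧ ¬z ≤ x ∧ ¬y ≤ z ∧ ¬z ≤ y)


/-!
A downset of `P_iR_i` is a pair of downsets of the towers `Fin i ⊕ₗ P₀` and `Fin i ⊕ₗ R₀`, and a
downset of a tower is either an initial segment of its chain or the whole chain together with a
downset of the top. For size `m + i + 1` with `i ≥ m` at most one tower can reach its top, so
the downset is either `(Fin i ⊕ₗ C) ⊕ Fin (m + 1 - |C|)` for a nonempty downset `C` of `P₀` or
`R₀`, or a pair of chains `Fin a ⊕ Fin (m + i + 1 - a)` with `m < a ≤ (m + i + 1) / 2`.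

These classes are told apart by the number of elements below a point, an order invariant: the
points with more than `i` elements below form a copy of `C`, and two chain pairs differ in their
longest chain. Hence the count is `|D(P₀) ∪ D(R₀)| = C(P₀R₀)` plus `⌈(i - m) / 2⌉`.
-/

lemma cls_eq_iff {P Q : FinPartOrd.{0}} : cls P = cls Q ↔ Nonempty (P ≃o Q) :=
  ⟨Quotient.exact, fun h => Quotient.sound h⟩

lemma isDownset_iff_isLowerSet {Q : FinPartOrd.{0}} {D : Finset Q} :
    IsDownset Q D ↔ IsLowerSet (D : Set Q) :=
  ⟨fun h _ _ hle ha => h ha hle, fun h _ _ ha hle => h hle ha⟩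

lemma mem_DSet_iff {n : ℕ} {Q : FinPartOrd.{0}} {c : UPoset} :
    c ∈ DSet n Q ↔ ∃ s : Set Q, IsLowerSet s ∧ Nat.card s = n ∧ cls (FinPartOrd.of s) = c := by
  constructor
  · rintro ⟨D, hD, rfl, rfl⟩
    exact ⟨D, isDownset_iff_isLowerSet.1 hD, by simp, cls_eq_iff.2 ⟨OrderIso.refl _⟩⟩
  · rintro ⟨s, hs, rfl, rfl⟩
    refine ⟨s.toFinset, isDownset_iff_isLowerSet.2 (by simpa using hs), ?_, ?_⟩
    · simp [Nat.card_eq_fintype_card]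
    · exact cls_eq_iff.2 ⟨OrderIso.setCongr _ _ (Set.coe_toFinset s)⟩

lemma mem_DAllSet_iff {Q : FinPartOrd.{0}} {c : UPoset} :
    c ∈ DAllSet Q ↔ ∃ s : Set Q, IsLowerSet s ∧ s.Nonempty ∧ cls (FinPartOrd.of s) = c := by
  constructor
  · rintro ⟨D, hD, hne, rfl⟩
    exact ⟨D, isDownset_iff_isLowerSet.1 hD, hne, cls_eq_iff.2 ⟨OrderIso.refl _⟩⟩
  · rintro ⟨s, hs, hne, rfl⟩
    exact ⟨s.toFinset, isDownset_iff_isLowerSet.2 (by simpa using hs), by simpa using hne,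
      cls_eq_iff.2 ⟨OrderIso.setCongr _ _ (Set.coe_toFinset s)⟩⟩

section Decomposition

variable {α β : Type*}

def OrderIso.sumPreimage [LE α] [LE β] (s : Set (α ⊕ β)) :
    s ≃o (Sum.inl ⁻¹' s : Set α) ⊕ (Sum.inr ⁻¹' s : Set β) where
  toEquiv := Equiv.subtypeSum
  map_rel_iff' := by
    rintro ⟨a | a, ha⟩ ⟨b | b, hb⟩ <;> simp [Equiv.subtypeSum]

def OrderIso.sumLexPreimage [LE α] [LE β] (s : Set (α ⊕ₗ β)) :
    s ≃o ((toLex ∘ Sum.inl) ⁻¹' s : Set α) ⊕ₗ ((toLex ∘ Sum.inr) ⁻¹' s : Set β) where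
  toEquiv := (Equiv.subtypeSum (p := fun x => toLex x ∈ s)).trans toLex
  map_rel_iff' := by
    rintro ⟨a | a, ha⟩ ⟨b | b, hb⟩
    exacts [Sum.Lex.inl_le_inl_iff.trans (Sum.Lex.inl_le_inl_iff (β := β) (a := a)).symm,
      iff_of_true (Sum.Lex.inl_le_inr _ _) (Sum.Lex.inl_le_inr (α := α) _ _),
      iff_of_false Sum.Lex.not_inr_le_inl (Sum.Lex.not_inr_le_inl (α := α)),
      Sum.Lex.inr_le_inr_iff.trans (Sum.Lex.inr_le_inr_iff (α := α) (a := a)).symm]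

end Decomposition

section Tower

variable {β : Type*} [PartialOrder β] {i a : ℕ}

def towerSet (i a : ℕ) (X : Set β) : Set (Fin i ⊕ₗ β) :=
  {x | Sum.elim (fun j : Fin i => (j : ℕ) < a) (· ∈ X) (ofLex x)}

/-- Every lower set of `Fin i ⊕ₗ β` is, up to isomorphism, `towerSet i a X` for parameters
`(a, X)` of this kind. -/
def IsTowerShape (i a : ℕ) (X : Set β) : Prop :=
  a ≤ i ∧ IsLowerSet X ∧ (X.Nonempty → a = i)

lemma isTowerShape_empty (ha : a ≤ i) : IsTowerShape i a (∅ : Set β) :=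
  ⟨ha, isLowerSet_empty, fun h => absurd h Set.not_nonempty_empty⟩

lemma IsLowerSet.isTowerShape_full {X : Set β} (hX : IsLowerSet X) : IsTowerShape i i X :=
  ⟨le_rfl, hX, fun _ => rfl⟩

lemma IsTowerShape.isLowerSet_towerSet {X : Set β} (h : IsTowerShape i a X) :
    IsLowerSet (towerSet i a X) := by
  obtain ⟨-, hX, hXa⟩ := h
  intro x y hle hx
  obtain ⟨j | p, rfl⟩ := toLex.surjective x <;> obtain ⟨k | q, rfl⟩ := toLex.surjective y
  · exact lt_of_le_of_lt (Fin.le_iff_val_le_val.1 (Sum.Lex.inl_le_inl_iff.1 hle)) hx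
  · exact absurd hle Sum.Lex.not_inr_le_inl
  · exact (hXa ⟨p, hx⟩).symm ▸ k.isLt
  · exact hX (Sum.Lex.inr_le_inr_iff.1 hle) hx

def towerSetOrderIso {X : Set β} (ha : a ≤ i) : towerSet i a X ≃o Fin a ⊕ₗ X :=
  (OrderIso.sumLexPreimage _).trans <| OrderIso.sumLexCongr
    ((monoEquivOfFin _ (Fintype.card_fin_lt_of_le ha)).symm) (OrderIso.refl _)

lemma IsLowerSet.isTowerShape [Finite β] {s : Set (Fin i ⊕ₗ β)} (hs : IsLowerSet s) :
    IsTowerShape i (Nat.card ((toLex ∘ Sum.inl) ⁻¹' s)) ((toLex ∘ Sum.inr) ⁻¹' s) := by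
  refine ⟨?_, hs.preimage Sum.Lex.inr_mono, ?_⟩
  · exact (Finite.card_subtype_le _).trans_eq (Nat.card_fin i)
  · rintro ⟨p, hp⟩
    have : (toLex ∘ Sum.inl) ⁻¹' s = Set.univ :=
      Set.eq_univ_of_forall fun j => hs (Sum.Lex.inl_le_inr j p) hp
    rw [this, Nat.card_univ, Nat.card_fin]

def towerOrderIso (s : Set (Fin i ⊕ₗ β)) :
    s ≃o Fin (Nat.card ((toLex ∘ Sum.inl) ⁻¹' s)) ⊕ₗ ((toLex ∘ Sum.inr) ⁻¹' s : Set β) :=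
  (OrderIso.sumLexPreimage s).trans <| OrderIso.sumLexCongr
    ((monoEquivOfFin _ Nat.card_eq_fintype_card.symm).symm) (OrderIso.refl _)

end Tower

lemma isLowerSet_sumElim {α β : Type*} [Preorder α] [Preorder β] {s : Set α} {t : Set β}
    (hs : IsLowerSet s) (ht : IsLowerSet t) :
    IsLowerSet {x : α ⊕ β | Sum.elim (· ∈ s) (· ∈ t) x} := by
  rintro (a | b) (a' | b') hle h
  · exact hs (Sum.inl_le_inl_iff.1 hle) h
  · exact absurd hle Sum.not_inr_le_inl
  · exact absurd hle Sum.not_inl_le_inr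
  · exact ht (Sum.inr_le_inr_iff.1 hle) h

lemma Nat.card_towerSum {X Y : Type*} [Finite X] [Finite Y] (a b : ℕ) :
    Nat.card ((Fin a ⊕ₗ X) ⊕ (Fin b ⊕ₗ Y)) = a + Nat.card X + b + Nat.card Y := by
  rw [Nat.card_congr (Equiv.sumCongr toLex.symm toLex.symm), Nat.card_sum, Nat.card_sum,
    Nat.card_sum, Nat.card_fin, Nat.card_fin]
  ring

section TowerPair

variable {α β : Type*} [PartialOrder α] [PartialOrder β] {i : ℕ}

lemma IsLowerSet.exists_towerShape [Finite α] [Finite β] {s : Set ((Fin i ⊕ₗ α) ⊕ (Fin i ⊕ₗ β))}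
    (hs : IsLowerSet s) : ∃ (a b : ℕ) (X : Set α) (Y : Set β),
      IsTowerShape i a X ∧ IsTowerShape i b Y ∧ Nonempty (s ≃o (Fin a ⊕ₗ X) ⊕ (Fin b ⊕ₗ Y)) :=
  ⟨_, _, _, _, (hs.preimage Sum.inl_mono).isTowerShape, (hs.preimage Sum.inr_mono).isTowerShape,
    ⟨(OrderIso.sumPreimage s).trans
      (OrderIso.sumCongr (towerOrderIso (Sum.inl ⁻¹' s)) (towerOrderIso (Sum.inr ⁻¹' s)))⟩⟩

lemma IsTowerShape.exists_isLowerSet {a b : ℕ} {X : Set α} {Y : Set β} (hX : IsTowerShape i a X)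
    (hY : IsTowerShape i b Y) : ∃ s : Set ((Fin i ⊕ₗ α) ⊕ (Fin i ⊕ₗ β)),
      IsLowerSet s ∧ Nonempty (s ≃o (Fin a ⊕ₗ X) ⊕ (Fin b ⊕ₗ Y)) :=
  ⟨_, isLowerSet_sumElim hX.isLowerSet_towerSet hY.isLowerSet_towerSet,
    ⟨(OrderIso.sumPreimage _).trans
      (OrderIso.sumCongr (towerSetOrderIso hX.1) (towerSetOrderIso hY.1))⟩⟩

end TowerPair

lemma mem_DSet_PRposet_iff {n i : ℕ} {P R : FinPartOrd.{0}} {c : UPoset} :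
    c ∈ DSet n (PRposet P R i) ↔ ∃ (a b : ℕ) (X : Set P) (Y : Set R),
      IsTowerShape i a X ∧ IsTowerShape i b Y ∧ a + Nat.card X + b + Nat.card Y = n ∧
      cls (FinPartOrd.of ((Fin a ⊕ₗ X) ⊕ (Fin b ⊕ₗ Y))) = c := by
  rw [mem_DSet_iff]
  constructor
  · rintro ⟨s, hs, rfl, rfl⟩
    obtain ⟨a, b, X, Y, hX, hY, ⟨e⟩⟩ := IsLowerSet.exists_towerShape (α := P) (β := R) hs
    exact ⟨a, b, X, Y, hX, hY, ((Nat.card_congr e.toEquiv).trans (Nat.card_towerSum a b)).symm,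
      (cls_eq_iff.2 ⟨e⟩).symm⟩
  · rintro ⟨a, b, X, Y, hX, hY, rfl, rfl⟩
    obtain ⟨s, hs, ⟨e⟩⟩ := hX.exists_isLowerSet hY
    exact ⟨s, hs, (Nat.card_congr e.toEquiv).trans (Nat.card_towerSum a b), cls_eq_iff.2 ⟨e⟩⟩

def ladderModel (i b : ℕ) (C : FinPartOrd.{0}) : FinPartOrd.{0} :=
  FinPartOrd.of ((Fin i ⊕ₗ C) ⊕ Fin b)

/-- Sends the class of a downset `C` of `P₀` (or `R₀`) to the class of the downset of `P_iR_i`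
made of `C` over its full chain and the first `m + 1 - |C|` elements of the other chain. -/
def ladderClass (i m : ℕ) : UPoset → UPoset :=
  Quotient.lift (fun C => cls (ladderModel i (m + 1 - size C) C)) fun C C' ⟨e⟩ => by
    rw [show size C = size C' from Fintype.card_congr e.toEquiv]
    exact cls_eq_iff.2 ⟨OrderIso.sumCongr (OrderIso.sumLexCongr (.refl _) e) (.refl _)⟩

lemma ladderClass_cls (i m : ℕ) (C : FinPartOrd.{0}) :
    ladderClass i m (cls C) = cls (ladderModel i (m + 1 - size C) C) :=
  rfl

def chainPairClass (a b : ℕ) : UPoset := cls (FinPartOrd.of (Fin a ⊕ Fin b))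

lemma chainPairClass_comm (a b : ℕ) : chainPairClass a b = chainPairClass b a :=
  cls_eq_iff.2 ⟨OrderIso.sumComm _ _⟩

section TowerSumClass

variable {α β : Type} [PartialOrder α] [PartialOrder β] [Fintype α] [Fintype β] (X : Set α)
  (Y : Set β) (a b : ℕ)

lemma cls_towerSum_of_isEmpty_right [IsEmpty Y] :
    cls (FinPartOrd.of ((Fin a ⊕ₗ X) ⊕ (Fin b ⊕ₗ Y))) = cls (ladderModel a b (FinPartOrd.of X)) :=
  cls_eq_iff.2 ⟨OrderIso.sumCongr (.refl _) OrderIso.sumLexEmpty⟩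

lemma cls_towerSum_of_isEmpty_left [IsEmpty X] :
    cls (FinPartOrd.of ((Fin a ⊕ₗ X) ⊕ (Fin b ⊕ₗ Y))) = cls (ladderModel b a (FinPartOrd.of Y)) :=
  cls_eq_iff.2 ⟨(OrderIso.sumCongr OrderIso.sumLexEmpty (.refl _)).trans (OrderIso.sumComm _ _)⟩

lemma cls_towerSum_of_isEmpty [IsEmpty X] [IsEmpty Y] :
    cls (FinPartOrd.of ((Fin a ⊕ₗ X) ⊕ (Fin b ⊕ₗ Y))) = chainPairClass a b :=
  cls_eq_iff.2 ⟨OrderIso.sumCongr OrderIso.sumLexEmpty OrderIso.sumLexEmpty⟩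

end TowerSumClass

section Classification

variable {m i : ℕ} {P R : FinPartOrd.{0}}

lemma natCard_le_size {Q : FinPartOrd.{0}} (X : Set Q) : Nat.card X ≤ size Q :=
  (Finite.card_subtype_le _).trans_eq Nat.card_eq_fintype_card

lemma size_of_set {Q : FinPartOrd.{0}} (X : Set Q) : size (FinPartOrd.of X) = Nat.card X :=
  Nat.card_eq_fintype_card.symm

lemma DSet_PRposet_subset (hP : size P = m) (hR : size R = m) (hi : m ≤ i) :
    DSet (m + i + 1) (PRposet P R i) ⊆ ladderClass i m '' (DAllSet P ∪ DAllSet R) ∪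
      (fun a => chainPairClass a (m + i + 1 - a)) '' Set.Icc (m + 1) ((m + i + 1) / 2) := by
  intro c hc
  obtain ⟨a, b, X, Y, ⟨ha, hXl, hXa⟩, ⟨hb, hYl, hYb⟩, hcard, rfl⟩ := mem_DSet_PRposet_iff.1 hc
  have hXm := natCard_le_size X
  have hYm := natCard_le_size Y
  rcases X.eq_empty_or_nonempty with rfl | hX <;> rcases Y.eq_empty_or_nonempty with rfl | hY
  · rw [cls_towerSum_of_isEmpty]
    simp only [Nat.card_of_isEmpty, add_zero] at hcard
    right
    rcases le_total a b with hab | hab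
    · exact ⟨a, ⟨by omega, by omega⟩, by dsimp only; rw [show m + i + 1 - a = b by omega]⟩
    · exact ⟨b, ⟨by omega, by omega⟩, by
      dsimp only; rw [chainPairClass_comm, show m + i + 1 - b = a by omega]⟩
  · refine Or.inl ⟨cls (FinPartOrd.of Y), Or.inr (mem_DAllSet_iff.2 ⟨Y, hYl, hY, rfl⟩), ?_⟩
    simp only [Nat.card_of_isEmpty, add_zero] at hcard
    rw [hYb hY] at hcard
    rw [cls_towerSum_of_isEmpty_left, ladderClass_cls, size_of_set, hYb hY,
      show m + 1 - Nat.card Y = a by omega]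
  · refine Or.inl ⟨cls (FinPartOrd.of X), Or.inl (mem_DAllSet_iff.2 ⟨X, hXl, hX, rfl⟩), ?_⟩
    simp only [Nat.card_of_isEmpty, add_zero] at hcard
    rw [hXa hX] at hcard
    rw [cls_towerSum_of_isEmpty_right, ladderClass_cls, size_of_set, hXa hX,
      show m + 1 - Nat.card X = b by omega]
  · -- both towers would be full, but `2 * i + 2 > m + i + 1`
    have := hX.to_subtype
    have := Nat.card_pos (α := X)
    have := hY.to_subtype
    have := Nat.card_pos (α := Y)
    have := hXa hX
    have := hYb hY
    omega

lemma subset_DSet_PRposet (hP : size P = m) (hR : size R = m) (hi : m ≤ i) :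
    ladderClass i m '' (DAllSet P ∪ DAllSet R) ∪
      (fun a => chainPairClass a (m + i + 1 - a)) '' Set.Icc (m + 1) ((m + i + 1) / 2) ⊆
      DSet (m + i + 1) (PRposet P R i) := by
  rintro c (⟨c, (hc | hc), rfl⟩ | ⟨a, ⟨ha₁, ha₂⟩, rfl⟩) <;> rw [mem_DSet_PRposet_iff]
  · obtain ⟨X, hXl, hX, rfl⟩ := mem_DAllSet_iff.1 hc
    have := natCard_le_size X
    have := hX.to_subtype
    have := Nat.card_pos (α := X)
    refine ⟨i, m + 1 - Nat.card X, X, ∅, hXl.isTowerShape_full, isTowerShape_empty (by omega),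
      by simp only [Nat.card_of_isEmpty, add_zero]; omega, ?_⟩
    rw [cls_towerSum_of_isEmpty_right, ladderClass_cls, size_of_set]
  · obtain ⟨Y, hYl, hY, rfl⟩ := mem_DAllSet_iff.1 hc
    have := natCard_le_size Y
    have := hY.to_subtype
    have := Nat.card_pos (α := Y)
    refine ⟨m + 1 - Nat.card Y, i, ∅, Y, isTowerShape_empty (by omega), hYl.isTowerShape_full,
      by simp only [Nat.card_of_isEmpty, add_zero]; omega, ?_⟩
    rw [cls_towerSum_of_isEmpty_left, ladderClass_cls, size_of_set]
  · refine ⟨a, m + i + 1 - a, ∅, ∅, isTowerShape_empty (by omega), isTowerShape_empty (by omega),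
      by simp only [Nat.card_of_isEmpty, add_zero]; omega, ?_⟩
    rw [cls_towerSum_of_isEmpty]

end Classification

section NumBelow

variable {α β : Type*}

def numBelow [Preorder α] (x : α) : ℕ := (Set.Iic x).ncard

lemma OrderIso.numBelow_apply [Preorder α] [Preorder β] (e : α ≃o β) (x : α) :
    numBelow (e x) = numBelow x := by
  rw [numBelow, numBelow, ← e.image_Iic, Set.ncard_image_of_injective _ e.injective]

lemma numBelow_pos [Preorder α] [Finite α] (x : α) : 0 < numBelow x :=
  (Set.ncard_pos).2 ⟨x, le_rfl⟩

lemma Fin.numBelow_eq {n : ℕ} (j : Fin n) : numBelow j = j + 1 := by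
  rw [numBelow, ← Finset.coe_Iic, Set.ncard_coe_finset, Fin.card_Iic]

variable [Preorder α] [Preorder β]

lemma Sum.numBelow_inl (x : α) : numBelow (Sum.inl x : α ⊕ β) = numBelow x := by
  have : Set.Iic (Sum.inl x : α ⊕ β) = Sum.inl '' Set.Iic x := by
    ext (y | y) <;> simp
  rw [numBelow, this, Set.ncard_image_of_injective _ Sum.inl_injective, numBelow]

lemma Sum.numBelow_inr (y : β) : numBelow (Sum.inr y : α ⊕ β) = numBelow y := by
  have : Set.Iic (Sum.inr y : α ⊕ β) = Sum.inr '' Set.Iic y := by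
    ext (x | x) <;> simp
  rw [numBelow, this, Set.ncard_image_of_injective _ Sum.inr_injective, numBelow]

lemma Sum.Lex.numBelow_inl (x : α) : numBelow (toLex (Sum.inl x) : α ⊕ₗ β) = numBelow x := by
  have : Set.Iic (toLex (Sum.inl x) : α ⊕ₗ β) = (toLex ∘ Sum.inl) '' Set.Iic x := by
    ext y
    obtain ⟨y | y, rfl⟩ := toLex.surjective y <;> simp
  rw [numBelow, this, Set.ncard_image_of_injective _ (toLex.injective.comp Sum.inl_injective),
    numBelow]

lemma Sum.Lex.numBelow_inr [Finite α] [Finite β] (y : β) :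
    numBelow (toLex (Sum.inr y) : α ⊕ₗ β) = Nat.card α + numBelow y := by
  have : Set.Iic (toLex (Sum.inr y) : α ⊕ₗ β) =
      Set.range (toLex ∘ Sum.inl) ∪ (toLex ∘ Sum.inr) '' Set.Iic y := by
    ext x
    obtain ⟨x | x, rfl⟩ := toLex.surjective x <;> simp
  rw [numBelow, this, Set.ncard_union_eq, Set.ncard_range_of_injective,
    Set.ncard_image_of_injective, numBelow]
  · exact toLex.injective.comp Sum.inr_injective
  · exact toLex.injective.comp Sum.inl_injective
  · rw [Set.disjoint_left]
    rintro _ ⟨x, rfl⟩ ⟨y, -, h⟩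
    exact Sum.inr_ne_inl h

end NumBelow

lemma OrderIso.exists_lt_numBelow_iff {α β : Type*} [Preorder α] [Preorder β] (e : α ≃o β)
    (t : ℕ) : (∃ x : α, t < numBelow x) ↔ ∃ y : β, t < numBelow y :=
  ⟨fun ⟨x, hx⟩ => ⟨e x, by rwa [e.numBelow_apply]⟩,
    fun ⟨y, hy⟩ => ⟨e.symm y, by rwa [e.symm.numBelow_apply]⟩⟩

lemma exists_lt_numBelow_finSum_iff {a b t : ℕ} :
    (∃ x : Fin a ⊕ Fin b, t < numBelow x) ↔ t < max a b := by
  constructor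
  · rintro ⟨j | j, hj⟩
    · rw [Sum.numBelow_inl, Fin.numBelow_eq] at hj; omega
    · rw [Sum.numBelow_inr, Fin.numBelow_eq] at hj; omega
  · intro ht
    rcases lt_max_iff.1 ht with h | h
    · exact ⟨Sum.inl ⟨t, h⟩, by rw [Sum.numBelow_inl, Fin.numBelow_eq]; exact t.lt_succ_self⟩
    · exact ⟨Sum.inr ⟨t, h⟩, by rw [Sum.numBelow_inr, Fin.numBelow_eq]; exact t.lt_succ_self⟩

lemma max_eq_of_finSum_orderIso {a b a' b' : ℕ} (e : Fin a ⊕ Fin b ≃o Fin a' ⊕ Fin b') :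
    max a b = max a' b' :=
  eq_of_forall_lt_iff fun t => by
    rw [← exists_lt_numBelow_finSum_iff, ← exists_lt_numBelow_finSum_iff,
      e.exists_lt_numBelow_iff]

section MixedModel

variable {γ δ : Type*} [PartialOrder γ] [PartialOrder δ] {i b b' : ℕ}

def topEmbedding (γ : Type*) [PartialOrder γ] (i b : ℕ) : γ ↪o (Fin i ⊕ₗ γ) ⊕ Fin b :=
  OrderEmbedding.ofMapLEIff (Sum.inl ∘ toLex ∘ Sum.inr)
    fun _ _ => Sum.inl_le_inl_iff.trans Sum.Lex.inr_le_inr_iff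

lemma lt_numBelow_iff_mem_range_topEmbedding [Finite γ] (hb : b ≤ i)
    (x : (Fin i ⊕ₗ γ) ⊕ Fin b) : i < numBelow x ↔ x ∈ Set.range (topEmbedding γ i b) := by
  have hrange : Set.range (topEmbedding γ i b) = Set.range (Sum.inl ∘ toLex ∘ Sum.inr) := rfl
  rw [hrange]
  obtain (x | j) := x
  · obtain ⟨j | c, rfl⟩ := toLex.surjective x
    · rw [Sum.numBelow_inl, Sum.Lex.numBelow_inl, Fin.numBelow_eq]
      simp only [Set.mem_range, Function.comp_apply, Sum.inl.injEq, EmbeddingLike.apply_eq_iff_eq,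
        reduceCtorEq, exists_false, iff_false, not_lt]
      exact j.isLt
    · rw [Sum.numBelow_inl, Sum.Lex.numBelow_inr, Nat.card_eq_fintype_card, Fintype.card_fin]
      simpa using numBelow_pos c
  · rw [Sum.numBelow_inr, Fin.numBelow_eq]
    simp only [Set.mem_range, Function.comp_apply, reduceCtorEq, exists_false, iff_false, not_lt]
    omega

lemma nonempty_orderIso_of_mixed_orderIso [Finite γ] [Finite δ] (hb : b ≤ i) (hb' : b' ≤ i)
    (e : (Fin i ⊕ₗ γ) ⊕ Fin b ≃o (Fin i ⊕ₗ δ) ⊕ Fin b') : Nonempty (γ ≃o δ) := by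
  let f := (topEmbedding γ i b).trans e.toOrderEmbedding
  have hf : Set.range f = Set.range (topEmbedding δ i b') := by
    ext y
    obtain ⟨x, rfl⟩ := e.surjective y
    rw [← lt_numBelow_iff_mem_range_topEmbedding hb', e.numBelow_apply,
      lt_numBelow_iff_mem_range_topEmbedding hb]
    simp [f]
  exact ⟨(OrderEmbedding.orderIso (f := f)).trans
    ((OrderIso.setCongr _ _ hf).trans (OrderEmbedding.orderIso (f := topEmbedding δ i b')).symm)⟩

lemma isEmpty_mixed_orderIso_finSum [Finite γ] [Nonempty γ] {a a' : ℕ} (ha : a ≤ i)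
    (ha' : a' ≤ i) : IsEmpty ((Fin i ⊕ₗ γ) ⊕ Fin b ≃o Fin a ⊕ Fin a') := by
  refine ⟨fun e => ?_⟩
  have hc : ∃ x : (Fin i ⊕ₗ γ) ⊕ Fin b, i < numBelow x :=
    ⟨Sum.inl (toLex (Sum.inr (Classical.arbitrary γ))), by
      rw [Sum.numBelow_inl, Sum.Lex.numBelow_inr, Nat.card_eq_fintype_card, Fintype.card_fin]
      exact Nat.lt_add_of_pos_right (numBelow_pos _)⟩
  rw [e.exists_lt_numBelow_iff, exists_lt_numBelow_finSum_iff] at hc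
  omega

end MixedModel

section Counting

variable {m i : ℕ} {P R : FinPartOrd.{0}}

lemma DAllSet_finite (Q : FinPartOrd.{0}) : (DAllSet Q).Finite :=
  (Set.finite_range fun D : Finset Q => cls (subposet Q D)).subset
    fun _ ⟨D, _, _, hD⟩ => ⟨D, hD⟩

lemma CNum_eq_ncard_union (P R : FinPartOrd.{0}) : CNum P R = (DAllSet P ∪ DAllSet R).ncard := by
  have := Set.ncard_union_add_ncard_inter _ _ (DAllSet_finite P) (DAllSet_finite R)
  rw [CNum]
  omega

lemma DAllSet_subset_usize_pos (Q : FinPartOrd.{0}) : DAllSet Q ⊆ {c | 0 < usize c} := by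
  intro c hc
  obtain ⟨X, -, hX, rfl⟩ := mem_DAllSet_iff.1 hc
  have := hX.to_subtype
  show 0 < size (FinPartOrd.of X)
  exact (size_of_set X).symm ▸ Nat.card_pos

lemma ladderClass_injOn (hi : m ≤ i) : Set.InjOn (ladderClass i m) {c | 0 < usize c} := by
  intro c hc c' hc' h
  obtain ⟨C, rfl⟩ := Quotient.exists_rep c
  obtain ⟨C', rfl⟩ := Quotient.exists_rep c'
  change 0 < size C at hc
  change 0 < size C' at hc'
  obtain ⟨e⟩ := cls_eq_iff.1 h
  exact Quotient.sound (nonempty_orderIso_of_mixed_orderIso (by omega) (by omega) e)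

lemma chainPairClass_injOn (n : ℕ) :
    Set.InjOn (fun a => chainPairClass a (n - a)) {a | 2 * a ≤ n} := by
  intro a ha b hb h
  obtain ⟨e⟩ := cls_eq_iff.1 h
  have := max_eq_of_finSum_orderIso e
  simp only [Set.mem_ofPred_eq] at ha hb
  rw [max_eq_right (by omega), max_eq_right (by omega)] at this
  omega

lemma disjoint_ladderClass_chainPairClass :
    Disjoint (ladderClass i m '' {c | 0 < usize c})
      ((fun a => chainPairClass a (m + i + 1 - a)) '' Set.Icc (m + 1) ((m + i + 1) / 2)) := by
  rw [Set.disjoint_left]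
  rintro _ ⟨c, hc, rfl⟩ ⟨a, ⟨ha₁, ha₂⟩, h⟩
  obtain ⟨C, rfl⟩ := Quotient.exists_rep c
  change 0 < size C at hc
  have : Nonempty C := Fintype.card_pos_iff.1 hc
  obtain ⟨e⟩ := cls_eq_iff.1 h
  exact (isEmpty_mixed_orderIso_finSum (b := m + 1 - size C) (by omega) (by omega)).false e.symm

theorem dNum_PRposet (hP : size P = m) (hR : size R = m) (hi : m ≤ i) :
    dNum (m + i + 1) (PRposet P R i) = CNum P R + (i - m + 1) / 2 := by
  have hpos : DAllSet P ∪ DAllSet R ⊆ {c | 0 < usize c} :=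
    Set.union_subset (DAllSet_subset_usize_pos P) (DAllSet_subset_usize_pos R)
  have hIcc : Set.Icc (m + 1) ((m + i + 1) / 2) ⊆ {a | 2 * a ≤ m + i + 1} :=
    fun a ha => by simp only [Set.mem_Icc] at ha; simp only [Set.mem_ofPred_eq]; omega
  rw [dNum, (DSet_PRposet_subset hP hR hi).antisymm (subset_DSet_PRposet hP hR hi),
    Set.ncard_union_eq (disjoint_ladderClass_chainPairClass.mono_left (Set.image_mono hpos))
      (((DAllSet_finite P).union (DAllSet_finite R)).image _) ((Set.finite_Icc _ _).image _),
    ((ladderClass_injOn hi).mono hpos).ncard_image,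
    ((chainPairClass_injOn _).mono hIcc).ncard_image, Set.ncard_Icc_nat, CNum_eq_ncard_union]
  omega

end Counting

theorem ladder_dNum_general (m : ℕ) (P₀ R₀ : FinPartOrd.{0}) (hP : size P₀ = m) (hR : size R₀ = m)
    (i : ℕ) (hi : m < i) :
    dNum (m + i + 1) (PRposet P₀ R₀ i) = CNum P₀ R₀ + (i - m + 1) / 2 ∧
      (Even (m + i) →
        dNum (m + i + 1) (PRposet P₀ R₀ i) = dNum (m + i) (PRposet P₀ R₀ (i - 1))) ∧
      (Odd (m + i) →
        dNum (m + i + 1) (PRposet P₀ R₀ i) = dNum (m + i) (PRposet P₀ R₀ (i - 1)) + 1) := by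
  have hcur := dNum_PRposet hP hR hi.le
  have hprev := dNum_PRposet hP hR (Nat.le_sub_one_of_lt hi)
  rw [show m + (i - 1) + 1 = m + i by omega] at hprev
  refine ⟨hcur, fun ⟨k, hk⟩ => ?_, fun ⟨k, hk⟩ => ?_⟩ <;> rw [hcur, hprev] <;> omega

/-- For non-isomorphic `P₀`, `R₀` of size `m` and `i > m`,
`d_{m+i+1}(P_iR_i) = C(P₀R₀) + ⌈(i−m)/2⌉`; in particular the sequence increases by `1`
exactly when `m + i` is odd. -/
theorem ladder_dNum (m : ℕ) (P₀ R₀ : FinPartOrd.{0}) (hP : size P₀ = m) (hR : size R₀ = m)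
    (hniso : ¬Nonempty (↥P₀ ≃o ↥R₀)) (i : ℕ) (hi : m < i) :
    dNum (m + i + 1) (PRposet P₀ R₀ i) = CNum P₀ R₀ + (i - m + 1) / 2 ∧
      (Even (m + i) →
        dNum (m + i + 1) (PRposet P₀ R₀ i) = dNum (m + i) (PRposet P₀ R₀ (i - 1))) ∧
      (Odd (m + i) →
        dNum (m + i + 1) (PRposet P₀ R₀ i) = dNum (m + i) (PRposet P₀ R₀ (i - 1)) + 1) :=
  ladder_dNum_general m P₀ R₀ hP hR i hi
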